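/- Let X and Y be Banach spaces and let C be a convex set of continuous n-homogeneous polynomials from X to Y that is closed with respect to the polynomial norm ‖P‖ = sup{‖P(x)‖ : ‖x‖ ≤ 1}. If C is not sequentially closed under pointwise convergence, i.e. there exist a sequence (P_k)_k ⊆ C and a continuous n-homogeneous polynomial P : X → Y with P ∉ C such that ‖P_k(x) − P(x)‖ → 0 for every x ∈ X, then there exists a continuous n-homogeneous polynomial from X to Y that does not attain its norm. -/

import Mathlib

/-!
Suppose every symmetric map attains its polynomial norm. Since `C` is closed and `P₀ ∉ C`, there
is `d > 0` with `polyNorm (P₀ - S) ≥ d` for all `S ∈ C`; by convexity every dyadic convex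
combination of the maps `G k = P₀ - P k` then has polynomial norm at least `d`. The `G k` tend to
`0` pointwise on the diagonal, and they are uniformly bounded by polarization and Banach–Steinhaus.
Simons' argument now chooses greedily, for each `m`, a combination `H m` of the tail `(G j)_{j ≥ m}`
that nearly minimizes the polynomial norm of `V m + 2⁻ᵐ H m`, where `V m = ∑_{k<m} 2⁻⁽ᵏ⁺¹⁾ H k`.
The sum `Ω = ∑ 2⁻⁽ᵏ⁺¹⁾ H k` attains its norm at some `x`; far out the tail is small at `x`, which
bounds `polyNorm Ω` by `d / 2`, whereas the greedy choice forces `polyNorm Ω ≥ d`.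
-/

open Filter Topology

variable {𝕜 : Type*} [RCLike 𝕜] {n : ℕ} {X : Type*}
  [NormedAddCommGroup X] [NormedSpace 𝕜 X]
  {Y : Type*} [NormedAddCommGroup Y] [NormedSpace 𝕜 Y]

/-- A continuous `n`-linear map on `Xⁿ` is symmetric; a continuous `n`-homogeneous polynomial
is (identified with) a symmetric continuous `n`-linear map `T`, via `P x = T (x, …, x)`. -/
def IsSymmML (T : ContinuousMultilinearMap 𝕜 (fun _ : Fin n => X) Y) : Prop :=
  ∀ (σ : Equiv.Perm (Fin n)) (x : Fin n → X), T (x ∘ σ) = T x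

/-- The norm of the `n`-homogeneous polynomial associated to `T`. -/
noncomputable def polyNorm (T : ContinuousMultilinearMap 𝕜 (fun _ : Fin n => X) Y) : ℝ :=
  sSup ((fun x => ‖T (fun _ => x)‖) '' Metric.closedBall (0 : X) 1)

/-- The polynomial associated to `T` attains its norm. -/
noncomputable def PolyNormAttaining
    (T : ContinuousMultilinearMap 𝕜 (fun _ : Fin n => X) Y) : Prop :=
  ∃ x : X, ‖x‖ ≤ 1 ∧ ‖T (fun _ => x)‖ = polyNorm T

section Sign

variable {R : Type*} [CommRing R]

theorem sum_prod_sign_mul_prod_sign_comp_of_not_surjective {r : Fin n → Fin n}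
    (hr : ¬ Function.Surjective r) :
    ∑ ε : Fin n → Bool, (∏ j, if ε j then (-1 : R) else 1) *
      ∏ i, (if ε (r i) then (-1 : R) else 1) = 0 := by
  obtain ⟨j₀, hj₀⟩ : ∃ j₀, ∀ i, r i ≠ j₀ := by simpa [Function.Surjective] using hr
  have hflip : ∀ ε : Fin n → Bool,
      (∏ j, if Function.update ε j₀ (!ε j₀) j then (-1 : R) else 1) =
        -∏ j, if ε j then (-1 : R) else 1 := by
    intro ε
    rw [Fintype.prod_eq_mul_prod_compl j₀, Fintype.prod_eq_mul_prod_compl j₀ (fun j => _),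
      Finset.prod_congr rfl (fun j hj => by rw [Function.update_of_ne (by simpa using hj)])]
    cases ε j₀ <;> simp
  -- flipping the sign at a coordinate `j₀` outside the range of `r` negates the summand
  refine Finset.sum_ninvolution (fun ε => Function.update ε j₀ (!ε j₀)) (fun ε => ?_)
    (fun ε _ => ne_of_apply_ne (· j₀) (by simp)) (fun _ => Finset.mem_univ _) (fun ε => by simp)
  simp only [hflip, Function.update_of_ne (hj₀ _)]
  ring

theorem sum_prod_sign_mul_prod_sign_comp_perm (σ : Equiv.Perm (Fin n)) :
    ∑ ε : Fin n → Bool, (∏ j, if ε j then (-1 : R) else 1) *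
      ∏ i, (if ε (σ i) then (-1 : R) else 1) = 2 ^ n := by
  rw [Finset.sum_congr rfl fun ε _ => by
    rw [Equiv.prod_comp σ (fun j => if ε j then (-1 : R) else 1), ← Finset.prod_mul_distrib]]
  simp [apply_ite₂]

end Sign

namespace MultilinearMap

variable {R M N : Type*} [CommRing R] [AddCommGroup M] [Module R M] [AddCommGroup N] [Module R N]

theorem sum_prod_sign_smul_apply_diag (f : MultilinearMap R (fun _ : Fin n => M) N)
    (x : Fin n → M) :
    ∑ ε : Fin n → Bool, (∏ j, if ε j then (-1 : R) else 1) •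
      f (fun _ => ∑ j, (if ε j then (-1 : R) else 1) • x j) =
      2 ^ n • ∑ σ : Equiv.Perm (Fin n), f (x ∘ σ) := by
  classical
  simp_rw [f.map_sum, f.map_smul_univ, Finset.smul_sum, smul_smul]
  rw [Finset.sum_comm]
  simp_rw [← Finset.sum_smul]
  symm
  refine Fintype.sum_of_injective (⇑) DFunLike.coe_injective _ _ (fun r hr => ?_) (fun σ => ?_)
  · rw [sum_prod_sign_mul_prod_sign_comp_of_not_surjective, zero_smul]
    exact fun h => hr ⟨Equiv.ofBijective r (Finite.surjective_iff_bijective.mp h), rfl⟩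
  · rw [sum_prod_sign_mul_prod_sign_comp_perm, ← Nat.cast_smul_eq_nsmul R]
    push_cast; rfl

end MultilinearMap

theorem ContinuousMultilinearMap.banach_steinhaus {𝕜 G ι : Type*} [NontriviallyNormedField 𝕜]
    [NormedAddCommGroup G] [NormedSpace 𝕜 G] :
    ∀ {m : ℕ} {E : Fin m → Type*} [∀ i, NormedAddCommGroup (E i)] [∀ i, NormedSpace 𝕜 (E i)]
      [∀ i, CompleteSpace (E i)] (F : ι → ContinuousMultilinearMap 𝕜 E G),
      (∀ x, ∃ C, ∀ i, ‖F i x‖ ≤ C) → ∃ C, ∀ i, ‖F i‖ ≤ C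
  | 0, E, _, _, _, F, h => by
    obtain ⟨C, hC⟩ := h 0
    refine ⟨max C 0, fun i => (F i).opNorm_le_bound (le_max_right C 0) fun x => ?_⟩
    simpa [Subsingleton.elim x 0] using (hC i).trans (le_max_left C 0)
  | m + 1, E, _, _, _, F, h => by
    have hpt : ∀ x, ∃ C, ∀ i, ‖(F i).curryLeft x‖ ≤ C := fun x =>
      banach_steinhaus (F := fun i => (F i).curryLeft x) fun v => h (Fin.cons x v)
    obtain ⟨C, hC⟩ := _root_.banach_steinhaus hpt
    exact ⟨C, fun i => (F i).curryLeft_norm ▸ hC i⟩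

/-- Closure under midpoints; it replaces the convex hull, since a `K`-module need not carry an
`ℝ`-module structure. -/
inductive MidpointHull (K : Type*) {E : Type*} [DivisionRing K] [AddCommGroup E] [Module K E]
    (s : Set E) : E → Prop
  | mem {x : E} : x ∈ s → MidpointHull K s x
  | mid {x y : E} : MidpointHull K s x → MidpointHull K s y → MidpointHull K s ((2⁻¹ : K) • (x + y))

namespace MidpointHull

theorem mono {K E : Type*} [DivisionRing K] [AddCommGroup E] [Module K E] {s t : Set E} {x : E}
    (hst : s ⊆ t) (hx : MidpointHull K s x) : MidpointHull K t x := by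
  induction hx with
  | mem h => exact mem (hst h)
  | mid _ _ hx hy => exact mid hx hy

theorem mem_submodule {K E : Type*} [DivisionRing K] [AddCommGroup E] [Module K E] {s : Set E}
    {x : E} {p : Submodule K E} (hs : s ⊆ p) (hx : MidpointHull K s x) : x ∈ p := by
  induction hx with
  | mem h => exact hs h
  | mid _ _ hx hy => exact p.smul_mem _ (p.add_mem hx hy)

theorem norm_map_le {K E F : Type*} [RCLike K] [NormedAddCommGroup E] [NormedSpace K E]
    [NormedAddCommGroup F] [NormedSpace K F] {s : Set E} {x : E} (L : E →L[K] F) {c : ℝ}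
    (hs : ∀ y ∈ s, ‖L y‖ ≤ c) (hx : MidpointHull K s x) : ‖L x‖ ≤ c := by
  induction hx with
  | mem h => exact hs _ h
  | @mid x y _ _ hx hy =>
    calc ‖L ((2⁻¹ : K) • (x + y))‖ ≤ 2⁻¹ * (‖L x‖ + ‖L y‖) := by
          rw [map_smul, map_add, norm_smul, norm_inv, RCLike.norm_ofNat]
          gcongr
          exact norm_add_le _ _
      _ ≤ c := by linarith

end MidpointHull

section Dyadic

variable {E F : Type*} [NormedAddCommGroup E] [NormedSpace 𝕜 E] [NormedAddCommGroup F]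
  [NormedSpace 𝕜 F]

variable (𝕜) in
def dyadicSum (f : ℕ → E) (m : ℕ) : E := ∑ k ∈ Finset.range m, (2⁻¹ : 𝕜) ^ (k + 1) • f k

theorem dyadicSum_zero (f : ℕ → E) : dyadicSum 𝕜 f 0 = 0 := Finset.sum_range_zero _

theorem dyadicSum_succ (f : ℕ → E) (m : ℕ) :
    dyadicSum 𝕜 f (m + 1) = dyadicSum 𝕜 f m + (2⁻¹ : 𝕜) ^ (m + 1) • f m :=
  Finset.sum_range_succ _ _

theorem dyadicSum_succ_add_smul (f : ℕ → E) (m : ℕ) (y : E) :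
    dyadicSum 𝕜 f (m + 1) + (2⁻¹ : 𝕜) ^ (m + 1) • y =
      dyadicSum 𝕜 f m + (2⁻¹ : 𝕜) ^ m • ((2⁻¹ : 𝕜) • (f m + y)) := by
  rw [dyadicSum_succ, pow_succ]
  module

theorem summable_geometric_two_smul [CompleteSpace E] {f : ℕ → E} {M : ℝ}
    (hf : ∀ k, ‖f k‖ ≤ M) : Summable fun k => (2⁻¹ : 𝕜) ^ (k + 1) • f k := by
  refine .of_norm_bounded ((summable_geometric_two.mul_left M).comp_injective
    (add_left_injective 1)) fun k => ?_
  rw [norm_smul, norm_pow, norm_inv, RCLike.norm_ofNat, mul_comm]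
  simp only [Function.comp_apply, one_div, inv_pow]
  gcongr
  exact hf k

theorem norm_map_tsum_sub_dyadicSum_le {f : ℕ → E}
    (hf : Summable fun k => (2⁻¹ : 𝕜) ^ (k + 1) • f k) (L : E →L[𝕜] F) {m : ℕ} {c : ℝ}
    (hc : ∀ k, m ≤ k → ‖L (f k)‖ ≤ c) :
    ‖L (∑' k, (2⁻¹ : 𝕜) ^ (k + 1) • f k - dyadicSum 𝕜 f m)‖ ≤ c * 2⁻¹ ^ m := by
  rw [← hf.sum_add_tsum_nat_add m, dyadicSum, add_sub_cancel_left,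
    L.map_tsum ((summable_nat_add_iff m).mpr hf)]
  refine tsum_of_norm_bounded (hasSum_geometric_two' (c * 2⁻¹ ^ m)) fun k => ?_
  rw [map_smul, norm_smul, norm_pow, norm_inv, RCLike.norm_ofNat]
  calc (2⁻¹ : ℝ) ^ (k + m + 1) * ‖L (f (k + m))‖ ≤ 2⁻¹ ^ (k + m + 1) * c := by
        gcongr; exact hc _ (by omega)
    _ = c * 2⁻¹ ^ m / 2 / 2 ^ k := by
        simp only [inv_pow, pow_add, pow_one]; field_simp

end Dyadic

local notation "CMM" => ContinuousMultilinearMap 𝕜 (fun _ : Fin n => X) Y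

theorem norm_apply_diag_le_norm (T : CMM) {x : X} (hx : ‖x‖ ≤ 1) : ‖T (fun _ => x)‖ ≤ ‖T‖ :=
  (T.le_opNorm _).trans <| mul_le_of_le_one_right (norm_nonneg T) <|
    Finset.prod_le_one (fun _ _ => norm_nonneg x) fun _ _ => hx

theorem le_polyNorm (T : CMM) {x : X} (hx : ‖x‖ ≤ 1) : ‖T (fun _ => x)‖ ≤ polyNorm T := by
  refine le_csSup ⟨‖T‖, ?_⟩ ⟨x, mem_closedBall_zero_iff.mpr hx, rfl⟩
  rintro _ ⟨y, hy, rfl⟩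
  exact norm_apply_diag_le_norm T (mem_closedBall_zero_iff.mp hy)

theorem polyNorm_le (T : CMM) {c : ℝ} (h : ∀ x : X, ‖x‖ ≤ 1 → ‖T (fun _ => x)‖ ≤ c) :
    polyNorm T ≤ c := by
  refine csSup_le ⟨_, 0, Metric.mem_closedBall_self zero_le_one, rfl⟩ ?_
  rintro _ ⟨x, hx, rfl⟩
  exact h x (mem_closedBall_zero_iff.mp hx)

theorem polyNorm_nonneg (T : CMM) : 0 ≤ polyNorm T :=
  (norm_nonneg _).trans (le_polyNorm T (x := 0) (by simp))

theorem polyNorm_zero : polyNorm (0 : CMM) = 0 :=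
  le_antisymm (polyNorm_le 0 fun _ _ => by simp) (polyNorm_nonneg 0)

theorem polyNorm_le_norm (T : CMM) : polyNorm T ≤ ‖T‖ :=
  polyNorm_le T fun _ => norm_apply_diag_le_norm T

theorem polyNorm_add_le (S T : CMM) : polyNorm (S + T) ≤ polyNorm S + polyNorm T :=
  polyNorm_le _ fun _ hx =>
    (norm_add_le _ _).trans (add_le_add (le_polyNorm S hx) (le_polyNorm T hx))

theorem polyNorm_smul_le (c : 𝕜) (T : CMM) : polyNorm (c • T) ≤ ‖c‖ * polyNorm T :=
  polyNorm_le _ fun _ hx => by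
    rw [smul_apply, norm_smul]
    exact mul_le_mul_of_nonneg_left (le_polyNorm T hx) (norm_nonneg c)

theorem polyNorm_midpoint_le (S T : CMM) :
    polyNorm ((2⁻¹ : 𝕜) • (S + T)) ≤ 2⁻¹ * (polyNorm S + polyNorm T) := by
  refine (polyNorm_smul_le _ _).trans ?_
  rw [norm_inv, RCLike.norm_ofNat]
  gcongr
  exact polyNorm_add_le S T

theorem lipschitzWith_polyNorm : LipschitzWith 1 (polyNorm : CMM → ℝ) :=
  .of_le_add fun S T =>
    calc polyNorm S = polyNorm (T + (S - T)) := by rw [add_sub_cancel]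
      _ ≤ polyNorm T + polyNorm (S - T) := polyNorm_add_le _ _
      _ ≤ polyNorm T + dist S T := by rw [dist_eq_norm]; gcongr; exact polyNorm_le_norm _

variable (𝕜 n X Y) in
def symmSubmodule : Submodule 𝕜 CMM where
  carrier := {T | IsSymmML T}
  add_mem' hS hT σ x := by simp only [add_apply, hS σ x, hT σ x]
  zero_mem' _ _ := rfl
  smul_mem' c _ hT σ x := by simp only [smul_apply, hT σ x]

theorem isClosed_symmSubmodule : IsClosed (symmSubmodule 𝕜 n X Y : Set CMM) := by
  simp only [symmSubmodule, Submodule.coe_set_mk, AddSubmonoid.coe_set_mk,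
    AddSubsemigroup.coe_set_mk, IsSymmML, Set.ofPred_forall]
  exact isClosed_iInter fun σ => isClosed_iInter fun x =>
    isClosed_eq (continuous_eval_const _) (continuous_eval_const _)

/-- Polarization turns a pointwise bound on the diagonals of a family of symmetric maps into a
pointwise bound on all arguments, to which Banach–Steinhaus applies. -/
theorem exists_norm_le_of_isSymmML [CompleteSpace X] {ι : Type*} (F : ι → CMM)
    (hF : ∀ i, IsSymmML (F i)) (h : ∀ x : X, ∃ C, ∀ i, ‖F i (fun _ => x)‖ ≤ C) :
    ∃ C, ∀ i, ‖F i‖ ≤ C := by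
  choose C hC using h
  refine ContinuousMultilinearMap.banach_steinhaus F fun v =>
    ⟨∑ ε : Fin n → Bool, C (∑ j, (if ε j then (-1 : 𝕜) else 1) • v j), fun i => ?_⟩
  have hpol := (F i).toMultilinearMap.sum_prod_sign_smul_apply_diag v
  simp only [ContinuousMultilinearMap.coe_coe, hF i _ v, Finset.sum_const, Finset.card_univ,
    Fintype.card_perm, Fintype.card_fin, smul_smul] at hpol
  calc ‖F i v‖ ≤ ‖(2 ^ n * n.factorial) • F i v‖ := by
        rw [RCLike.norm_nsmul 𝕜, nsmul_eq_mul]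
        exact le_mul_of_one_le_left (norm_nonneg _) (mod_cast Nat.one_le_iff_ne_zero.mpr
          (by positivity))
    _ ≤ ∑ ε : Fin n → Bool, ‖F i (fun _ => ∑ j, (if ε j then (-1 : 𝕜) else 1) • v j)‖ := by
        rw [← hpol]
        refine (norm_sum_le _ _).trans (Finset.sum_le_sum fun ε _ => ?_)
        rw [norm_smul, norm_prod]
        simp [apply_ite]
    _ ≤ _ := Finset.sum_le_sum fun ε _ => hC _ i

noncomputable def tailInf (G : ℕ → CMM) (m : ℕ) (V : CMM) : ℝ :=
  sInf ((fun H => polyNorm (V + (2⁻¹ : 𝕜) ^ m • H)) '' {H | MidpointHull 𝕜 (G '' Set.Ici m) H})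

theorem tailInf_le {G : ℕ → CMM} {m : ℕ} {V T : CMM} (hT : MidpointHull 𝕜 (G '' Set.Ici m) T) :
    tailInf G m V ≤ polyNorm (V + (2⁻¹ : 𝕜) ^ m • T) :=
  csInf_le ⟨0, by rintro _ ⟨T, -, rfl⟩; exact polyNorm_nonneg _⟩ ⟨T, hT, rfl⟩

theorem le_tailInf {G : ℕ → CMM} {m : ℕ} {V : CMM} {c : ℝ}
    (h : ∀ T, MidpointHull 𝕜 (G '' Set.Ici m) T → c ≤ polyNorm (V + (2⁻¹ : 𝕜) ^ m • T)) :
    c ≤ tailInf G m V :=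
  le_csInf ⟨_, G m, .mem (Set.mem_image_of_mem G Set.self_mem_Ici), rfl⟩ <| by
    rintro _ ⟨T, hT, rfl⟩
    exact h T hT

theorem exists_polyNorm_le_tailInf_add {G : ℕ → CMM} {m : ℕ} {V : CMM} {ε : ℝ} (hε : 0 < ε) :
    ∃ T, MidpointHull 𝕜 (G '' Set.Ici m) T ∧
      polyNorm (V + (2⁻¹ : 𝕜) ^ m • T) ≤ tailInf G m V + ε := by
  obtain ⟨_, ⟨T, hT, rfl⟩, hlt⟩ :=
    Real.lt_sInf_add_pos (s := (fun T => polyNorm (V + (2⁻¹ : 𝕜) ^ m • T)) ''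
      {T | MidpointHull 𝕜 (G '' Set.Ici m) T})
      ⟨_, G m, .mem (Set.mem_image_of_mem G Set.self_mem_Ici), rfl⟩ hε
  exact ⟨T, hT, hlt.le⟩

theorem exists_seq_polyNorm_le_tailInf_add (G : ℕ → CMM) {ε : ℕ → ℝ} (hε : ∀ m, 0 < ε m) :
    ∃ H : ℕ → CMM, ∀ m, MidpointHull 𝕜 (G '' Set.Ici m) (H m) ∧
      polyNorm (dyadicSum 𝕜 H m + (2⁻¹ : 𝕜) ^ m • H m) ≤ tailInf G m (dyadicSum 𝕜 H m) + ε m := by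
  choose pick hpick using fun m (V : CMM) =>
    exists_polyNorm_le_tailInf_add (G := G) (V := V) (hε m)
  let V : ℕ → CMM := fun m => Nat.rec 0 (fun k v => v + (2⁻¹ : 𝕜) ^ (k + 1) • pick k v) m
  have hV : ∀ m, dyadicSum 𝕜 (fun k => pick k (V k)) m = V m := by
    intro m
    induction m with
    | zero => exact dyadicSum_zero _
    | succ m ih => rw [dyadicSum_succ, ih]
  exact ⟨fun m => pick m (V m), fun m => hV m ▸ hpick m (V m)⟩

theorem monotone_tailInf_dyadicSum {G H : ℕ → CMM}
    (hH : ∀ m, MidpointHull 𝕜 (G '' Set.Ici m) (H m)) :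
    Monotone fun m => tailInf G m (dyadicSum 𝕜 H m) := by
  refine monotone_nat_of_le_succ fun m => le_tailInf fun T hT => ?_
  rw [dyadicSum_succ_add_smul]
  refine tailInf_le (.mid (hH m) (hT.mono (Set.image_mono fun k hk => ?_)))
  exact (Nat.le_succ m).trans hk

/-- The error budget `d / 8 * 4⁻ᵐ` is what makes this bound survive the midpoint recursion
`V (m + 1) = 2⁻¹ • (V m + (V m + 2⁻ᵐ • H m))`. -/
theorem polyNorm_dyadicSum_le {G H : ℕ → CMM} (hH : ∀ m, MidpointHull 𝕜 (G '' Set.Ici m) (H m))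
    {d : ℝ}
    (hopt : ∀ m, polyNorm (dyadicSum 𝕜 H m + (2⁻¹ : 𝕜) ^ m • H m) ≤
      tailInf G m (dyadicSum 𝕜 H m) + d / 8 * ((2⁻¹ : ℝ) ^ m) ^ 2) (m : ℕ) :
    polyNorm (dyadicSum 𝕜 H m) ≤
      (1 - (2⁻¹ : ℝ) ^ m) * (tailInf G m (dyadicSum 𝕜 H m) + d / 4 * (2⁻¹ : ℝ) ^ m) := by
  induction m with
  | zero => simp [dyadicSum_zero, polyNorm_zero]
  | succ m ih =>
    set w : ℝ := (2⁻¹ : ℝ) ^ m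
    have hw : w ≤ 1 := pow_le_one₀ (by norm_num) (by norm_num)
    have hmono := monotone_tailInf_dyadicSum hH (Nat.le_succ m)
    have hsplit : dyadicSum 𝕜 H (m + 1) = (2⁻¹ : 𝕜) •
        (dyadicSum 𝕜 H m + (dyadicSum 𝕜 H m + (2⁻¹ : 𝕜) ^ m • H m)) := by
      rw [dyadicSum_succ, pow_succ]
      module
    calc polyNorm (dyadicSum 𝕜 H (m + 1))
        ≤ 2⁻¹ * (polyNorm (dyadicSum 𝕜 H m)
          + polyNorm (dyadicSum 𝕜 H m + (2⁻¹ : 𝕜) ^ m • H m)) :=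
          hsplit ▸ polyNorm_midpoint_le _ _
      _ ≤ 2⁻¹ * ((1 - w) * (tailInf G m (dyadicSum 𝕜 H m) + d / 4 * w)
          + (tailInf G m (dyadicSum 𝕜 H m) + d / 8 * w ^ 2)) :=
          mul_le_mul_of_nonneg_left (add_le_add ih (hopt m)) (by norm_num)
      _ = (1 - w / 2) * (tailInf G m (dyadicSum 𝕜 H m) + d / 4 * (w / 2)) := by ring
      _ ≤ (1 - w / 2) * (tailInf G (m + 1) (dyadicSum 𝕜 H (m + 1)) + d / 4 * (w / 2)) := by
          gcongr; linarith
      _ = _ := by rw [pow_succ]; ring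

theorem tailInf_dyadicSum_le_polyNorm_tsum [CompleteSpace Y] {G H : ℕ → CMM}
    (hH : ∀ m, MidpointHull 𝕜 (G '' Set.Ici m) (H m)) {M : ℝ} (hM : ∀ k, ‖H k‖ ≤ M) (m : ℕ) :
    tailInf G m (dyadicSum 𝕜 H m) ≤ polyNorm (∑' k, (2⁻¹ : 𝕜) ^ (k + 1) • H k) := by
  have hsum := summable_geometric_two_smul (𝕜 := 𝕜) hM
  have hlim : Tendsto (fun K => dyadicSum 𝕜 H K + (2⁻¹ : 𝕜) ^ K • H K) atTop
      (𝓝 (∑' k, (2⁻¹ : 𝕜) ^ (k + 1) • H k)) := by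
    have h := hsum.hasSum.tendsto_sum_nat.add (hsum.tendsto_atTop_zero.const_smul (2 : 𝕜))
    rw [smul_zero, add_zero] at h
    refine h.congr fun K => ?_
    rw [dyadicSum, smul_smul, pow_succ, mul_left_comm, mul_inv_cancel₀ two_ne_zero, mul_one]
  refine ge_of_tendsto ((lipschitzWith_polyNorm.continuous.tendsto _).comp hlim)
    (eventually_atTop.mpr ⟨m, fun K hK => ?_⟩)
  exact (monotone_tailInf_dyadicSum hH hK).trans (tailInf_le (hH K))

theorem isSymmML_tsum {G H : ℕ → CMM} (hG : ∀ k, IsSymmML (G k))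
    (hH : ∀ m, MidpointHull 𝕜 (G '' Set.Ici m) (H m))
    (hsum : Summable fun k => (2⁻¹ : 𝕜) ^ (k + 1) • H k) :
    IsSymmML (∑' k, (2⁻¹ : 𝕜) ^ (k + 1) • H k) := by
  refine isClosed_symmSubmodule.mem_of_tendsto hsum.hasSum.tendsto_sum_nat
    (.of_forall fun K => Submodule.sum_mem _ fun k _ => Submodule.smul_mem _ _ ?_)
  exact (hH k).mem_submodule (by rintro _ ⟨j, -, rfl⟩; exact hG j)

theorem polyNorm_tsum_le {G H : ℕ → CMM} (hH : ∀ m, MidpointHull 𝕜 (G '' Set.Ici m) (H m))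
    (hsum : Summable fun k => (2⁻¹ : 𝕜) ^ (k + 1) • H k) {x : X} (hx : ‖x‖ ≤ 1)
    (hattains : ‖(∑' k, (2⁻¹ : 𝕜) ^ (k + 1) • H k) (fun _ => x)‖ =
      polyNorm (∑' k, (2⁻¹ : 𝕜) ^ (k + 1) • H k))
    {m : ℕ} {c : ℝ} (hc : ∀ j, m ≤ j → ‖G j (fun _ => x)‖ ≤ c) :
    polyNorm (∑' k, (2⁻¹ : 𝕜) ^ (k + 1) • H k) ≤ polyNorm (dyadicSum 𝕜 H m) + c * 2⁻¹ ^ m := by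
  set ev := ContinuousMultilinearMap.apply 𝕜 (fun _ : Fin n => X) Y (fun _ => x)
  have htail := norm_map_tsum_sub_dyadicSum_le hsum ev fun k hk => (hH k).norm_map_le ev <| by
    rintro _ ⟨j, hj, rfl⟩
    exact hc j (hk.trans hj)
  rw [← hattains, ← sub_add_cancel (∑' k, (2⁻¹ : 𝕜) ^ (k + 1) • H k) (dyadicSum 𝕜 H m),
    add_apply, add_comm (polyNorm _)]
  exact (norm_add_le _ _).trans (add_le_add htail (le_polyNorm _ hx))

/-- Simons' inequality in the setting of symmetric multilinear maps. -/
theorem exists_midpointHull_polyNorm_lt [CompleteSpace Y] (G : ℕ → CMM)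
    (hG : ∀ k, IsSymmML (G k)) {M : ℝ} (hM : ∀ k, ‖G k‖ ≤ M)
    (hlim : ∀ x : X, Tendsto (fun k => G k (fun _ => x)) atTop (𝓝 0))
    (hatt : ∀ T : CMM, IsSymmML T → PolyNormAttaining T) {d : ℝ} (hd : 0 < d) :
    ∃ H, MidpointHull 𝕜 (Set.range G) H ∧ polyNorm H < d := by
  by_contra! hfar
  obtain ⟨H, hH⟩ := exists_seq_polyNorm_le_tailInf_add G
    (ε := fun m => d / 8 * ((2⁻¹ : ℝ) ^ m) ^ 2) fun m => by positivity
  have hmem := fun m => (hH m).1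
  have hHM : ∀ k, ‖H k‖ ≤ M := fun k =>
    (hmem k).norm_map_le (ContinuousLinearMap.id 𝕜 _) (by rintro _ ⟨j, -, rfl⟩; exact hM j)
  have hsum := summable_geometric_two_smul (𝕜 := 𝕜) hHM
  set Ω := ∑' k, (2⁻¹ : 𝕜) ^ (k + 1) • H k
  obtain ⟨x, hx, hΩx⟩ := hatt Ω (isSymmML_tsum hG hmem hsum)
  obtain ⟨m, hm⟩ := eventually_atTop.mp
    ((hlim x).norm.eventually (ge_mem_nhds (by rw [norm_zero]; positivity : ‖(0 : Y)‖ < d / 4)))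
  have hΩle : polyNorm Ω ≤ polyNorm (dyadicSum 𝕜 H m) + d / 4 * 2⁻¹ ^ m :=
    polyNorm_tsum_le hmem hsum hx hΩx hm
  have hV := polyNorm_dyadicSum_le hmem (fun m => (hH m).2) m
  have hinf : tailInf G m (dyadicSum 𝕜 H m) ≤ polyNorm Ω :=
    tailInf_dyadicSum_le_polyNorm_tsum hmem hHM m
  have hd_le : d ≤ tailInf G m (dyadicSum 𝕜 H m) := by
    refine le_trans (le_tailInf fun T hT => ?_) (monotone_tailInf_dyadicSum hmem (Nat.zero_le m))
    simpa [dyadicSum_zero] using hfar T (hT.mono (Set.image_subset_range _ _))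
  have hw : 0 < (2⁻¹ : ℝ) ^ m := by positivity
  have hw1 : (2⁻¹ : ℝ) ^ m ≤ 1 := pow_le_one₀ (by norm_num) (by norm_num)
  have h1 := mul_le_mul_of_nonneg_left hinf (sub_nonneg.mpr hw1)
  have h2 : (2⁻¹ : ℝ) ^ m * polyNorm Ω ≤ (2⁻¹ : ℝ) ^ m * (d / 2) := by
    nlinarith [mul_nonneg (mul_nonneg hd.le hw.le) hw.le]
  linarith [le_of_mul_le_mul_left h2 hw]

/-- Lemma 2.15: if a convex, polynomial-norm-closed set of continuous `n`-homogeneous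
polynomials is not sequentially closed under pointwise convergence, then some continuous
`n`-homogeneous polynomial fails to attain its norm. -/
theorem stmt7 [CompleteSpace X] [CompleteSpace Y]
    (C : Set (ContinuousMultilinearMap 𝕜 (fun _ : Fin n => X) Y))
    (hsymm : ∀ T ∈ C, IsSymmML T)
    (hclosed : ∀ T : ContinuousMultilinearMap 𝕜 (fun _ : Fin n => X) Y, IsSymmML T →
      (∀ ε : ℝ, 0 < ε → ∃ S ∈ C, polyNorm (T - S) ≤ ε) → T ∈ C)
    (hconvex : ∀ T ∈ C, ∀ S ∈ C, ∀ t : ℝ, 0 ≤ t → t ≤ 1 →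
      ((t : 𝕜) • T + ((1 - t : ℝ) : 𝕜) • S) ∈ C)
    (hnotseqclosed : ∃ (P : ℕ → ContinuousMultilinearMap 𝕜 (fun _ : Fin n => X) Y)
      (P₀ : ContinuousMultilinearMap 𝕜 (fun _ : Fin n => X) Y),
        (∀ k, P k ∈ C) ∧ IsSymmML P₀ ∧ P₀ ∉ C ∧
        ∀ x : X, Filter.Tendsto (fun k => ‖P k (fun _ => x) - P₀ (fun _ => x)‖)
          Filter.atTop (nhds 0)) :
    ∃ T : ContinuousMultilinearMap 𝕜 (fun _ : Fin n => X) Y,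
      IsSymmML T ∧ ¬ PolyNormAttaining T := by
  by_contra! hatt
  obtain ⟨P, P₀, hPC, hP₀, hP₀C, hlim⟩ := hnotseqclosed
  obtain ⟨d, hd, hdC⟩ : ∃ d > 0, ∀ S ∈ C, d ≤ polyNorm (P₀ - S) := by
    by_contra! h
    exact hP₀C (hclosed P₀ hP₀ fun ε hε => (h ε hε).imp fun S hS => ⟨hS.1, hS.2.le⟩)
  set G := fun k => P₀ - P k
  have hG : ∀ k, IsSymmML (G k) := fun k =>
    (symmSubmodule 𝕜 n X Y).sub_mem hP₀ (hsymm _ (hPC k))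
  have hGlim : ∀ x : X, Tendsto (fun k => G k (fun _ => x)) atTop (𝓝 0) := fun x =>
    tendsto_zero_iff_norm_tendsto_zero.mpr <| by simpa [G, norm_sub_rev] using hlim x
  obtain ⟨M, hM⟩ := exists_norm_le_of_isSymmML G hG fun x =>
    (hGlim x).norm.bddAbove_range.imp fun _ hC k => hC ⟨k, rfl⟩
  have hGC : ∀ T, MidpointHull 𝕜 (Set.range G) T → P₀ - T ∈ C := by
    intro T hT
    induction hT with
    | mem h => obtain ⟨k, rfl⟩ := h; simpa [G] using hPC k
    | mid _ _ hA hB =>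
      convert hconvex _ hA _ hB 2⁻¹ (by norm_num) (by norm_num) using 1
      push_cast
      module
  obtain ⟨T, hT, hlt⟩ := exists_midpointHull_polyNorm_lt G hG hM hGlim hatt hd
  exact (hdC _ (hGC T hT)).not_gt (by rwa [sub_sub_cancel])
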